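/- For an integer n ≥ 2, define f : ℂ → ℂ by f(z) = zⁿ/z̄ for z ≠ 0 and f(0) = 0. Then: (1) for every disc D(a,r) = {z : |z−a| < r} whose closure contains 0 with |a| < r, the restriction of f to the circle {|z−a| = r} extends to a function holomorphic on D(a,r) and continuous on cl(D(a,r)) — explicitly, on the circle z̄ = ā + r²/(z−a), so f agrees there with the rational function zⁿ(z−a)/(r² + ā(z−a)), whose unique pole lies outside cl(D(a,r)) precisely when |a| < r; (2) f is not holomorphic on any nonempty open subset of ℂ ∖ {0}, since ∂̄f = −zⁿ/z̄² ≠ 0. Hence the hypothesis ⋂_{t∈M} cl(D_t) = ∅ in the strip-problem theorem cannot be omitted: for any family of discs all of whose closures contain 0, f extends holomorphically into each disc from its boundary circle yet is not holomorphic. -/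

import Mathlib

/-!
On the circle `|z - a| = r` one has `z̄ = ā + r² / (z - a)`, so there `zⁿ / z̄` coincides with the
rational function `zⁿ (z - a) / (r² + ā (z - a))`. Its only pole `a - r² / ā` lies at distance
`r² / |a|` from `a`, hence outside the closed disc exactly when `|a| < r`; this rational function is
the holomorphic extension. On the other hand `∂̄ (zⁿ / z̄) = -zⁿ / z̄²` vanishes nowhere on `ℂ ∖ {0}`,
whereas `∂̄` of a holomorphic function is zero.
-/

open Complex ComplexConjugate Metric

/-- The Wirtinger derivative `∂̄f = ½(∂ₓf + i ∂_yf)`, computed from the real Fréchet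
derivative. -/
noncomputable def wirtingerDbar (f : ℂ → ℂ) (z : ℂ) : ℂ :=
  (fderiv ℝ f z 1 + Complex.I * fderiv ℝ f z Complex.I) / 2

theorem wirtingerDbar_eq_zero_of_differentiableAt {f : ℂ → ℂ} {z : ℂ}
    (hf : DifferentiableAt ℂ f z) : wirtingerDbar f z = 0 := by
  have hI : fderiv ℂ f z I = I * fderiv ℂ f z 1 := by simp
  rw [wirtingerDbar, hf.fderiv_restrictScalars ℝ]
  simp only [ContinuousLinearMap.coe_restrictScalars', hI]
  linear_combination (fderiv ℂ f z 1 / 2) * I_sq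

theorem not_differentiableOn_of_wirtingerDbar_ne_zero {f : ℂ → ℂ} {U : Set ℂ} {z : ℂ}
    (hU : IsOpen U) (hz : z ∈ U) (hdbar : wirtingerDbar f z ≠ 0) : ¬ DifferentiableOn ℂ f U :=
  fun hf => hdbar <| wirtingerDbar_eq_zero_of_differentiableAt <|
    (hf z hz).differentiableAt (hU.mem_nhds hz)

theorem wirtingerDbar_pow_div_conj (n : ℕ) {z : ℂ} (hz : z ≠ 0) :
    wirtingerDbar (fun w => w ^ n / conj w) z = -z ^ n / conj z ^ 2 := by
  have hcz : conj z ≠ 0 := (map_ne_zero _).2 hz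
  have hpow := (hasDerivAt_pow n z).hasFDerivAt.restrictScalars ℝ
  have hinv := ((hasDerivAt_inv hcz).hasFDerivAt.restrictScalars ℝ).comp z
    conjCLE.toContinuousLinearMap.hasFDerivAt
  have hfun : (fun w : ℂ => w ^ n / conj w) = (fun w => w ^ n) * ((·⁻¹) ∘ conj) :=
    funext fun w => div_eq_mul_inv (w ^ n) (conj w)
  rw [wirtingerDbar, hfun, (hpow.mul hinv).fderiv]
  simp only [Function.comp_apply, add_apply, smul_apply, ContinuousLinearMap.comp_apply,
    ContinuousLinearEquiv.coe_coe, ContinuousAlgEquiv.coeCLE_apply, conjCAE_apply, map_one,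
    ContinuousLinearMap.coe_restrictScalars', ContinuousLinearMap.toSpanSingleton_apply, smul_eq_mul,
    mul_neg, one_mul, conj_I, neg_mul, neg_neg]
  field_simp
  linear_combination (z ^ n + n * z ^ (n - 1) * conj z) * I_sq

section Circle

variable {a z : ℂ} {r : ℝ}

theorem conj_sub_mul_sub_of_mem_sphere (hz : z ∈ sphere a r) :
    (conj z - conj a) * (z - a) = (r : ℂ) ^ 2 := by
  rw [← map_sub, mul_comm, mul_conj, normSq_eq_norm_sq, ← dist_eq, mem_sphere.1 hz]
  push_cast; ring

theorem conj_eq_add_sq_div_of_mem_sphere (hr : 0 < r) (hz : z ∈ sphere a r) :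
    conj z = conj a + (r : ℂ) ^ 2 / (z - a) := by
  have hza : z - a ≠ 0 := sub_ne_zero.2 (ne_of_mem_sphere hz hr.ne')
  field_simp
  linear_combination conj_sub_mul_sub_of_mem_sphere hz

theorem pow_div_conj_eq_of_mem_sphere (n : ℕ) (hr : 0 < r) (hz : z ∈ sphere a r) :
    z ^ n / conj z = z ^ n * (z - a) / ((r : ℂ) ^ 2 + conj a * (z - a)) := by
  have hza : z - a ≠ 0 := sub_ne_zero.2 (ne_of_mem_sphere hz hr.ne')
  rw [← mul_div_mul_right _ _ hza]
  congr 1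
  linear_combination conj_sub_mul_sub_of_mem_sphere hz

theorem sq_add_conj_mul_sub_ne_zero (ha : ‖a‖ < r) (hz : z ∈ closedBall a r) :
    (r : ℂ) ^ 2 + conj a * (z - a) ≠ 0 := by
  have hr : 0 < r := (norm_nonneg a).trans_lt ha
  have hlt : ‖conj a * (z - a)‖ < ‖(r : ℂ) ^ 2‖ := calc
    ‖conj a * (z - a)‖ = ‖a‖ * dist z a := by rw [norm_mul, norm_conj, dist_eq]
    _ ≤ ‖a‖ * r := mul_le_mul_of_nonneg_left (mem_closedBall.1 hz) (norm_nonneg a)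
    _ < r * r := mul_lt_mul_of_pos_right ha hr
    _ = ‖(r : ℂ) ^ 2‖ := by rw [norm_pow, norm_real, Real.norm_of_nonneg hr.le, sq]
  intro h
  rw [eq_neg_of_add_eq_zero_right h, norm_neg] at hlt
  exact hlt.false

theorem norm_lt_iff_sub_sq_div_conj_notMem_closedBall (hr : 0 < r) (ha : a ≠ 0) :
    ‖a‖ < r ↔ a - (r : ℂ) ^ 2 / conj a ∉ closedBall a r := by
  have hdist : dist (a - (r : ℂ) ^ 2 / conj a) a = r ^ 2 / ‖a‖ := by
    simp [abs_of_pos hr]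
  rw [mem_closedBall, hdist, not_le, lt_div_iff₀ (norm_pos_iff.2 ha)]
  constructor <;> intro h <;> nlinarith

theorem exists_extension_pow_div_conj_of_sphere (n : ℕ) (ha : ‖a‖ < r) :
    ∃ F : ℂ → ℂ, ContinuousOn F (closedBall a r) ∧ DifferentiableOn ℂ F (ball a r) ∧
      ∀ z ∈ sphere a r, F z = z ^ n / conj z := by
  have hr : 0 < r := (norm_nonneg a).trans_lt ha
  have hden : ∀ z ∈ closedBall a r, (r : ℂ) ^ 2 + conj a * (z - a) ≠ 0 :=
    fun z hz => sq_add_conj_mul_sub_ne_zero ha hz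
  refine ⟨fun z => z ^ n * (z - a) / ((r : ℂ) ^ 2 + conj a * (z - a)), ?_, ?_, ?_⟩
  · exact ContinuousOn.div (by fun_prop) (by fun_prop) hden
  · exact DifferentiableOn.div (by fun_prop) (by fun_prop)
      fun z hz => hden z (ball_subset_closedBall hz)
  · exact fun z hz => (pow_div_conj_eq_of_mem_sphere n hr hz).symm

end Circle

theorem stmt_19_general (n : ℕ) (f : ℂ → ℂ)
    (hf : ∀ z : ℂ, f z = z ^ n / (starRingEnd ℂ) z) :
    -- (1) holomorphic extension from every circle enclosing the origin (|a| < r)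
    (∀ (a : ℂ) (r : ℝ), 0 < r → ‖a‖ < r →
      ∃ F : ℂ → ℂ, ContinuousOn F (Metric.closedBall a r) ∧
        DifferentiableOn ℂ F (Metric.ball a r) ∧
        ∀ z ∈ Metric.sphere a r, F z = f z) ∧
    -- the explicit identities on the circle |z − a| = r
    (∀ (a : ℂ) (r : ℝ), 0 < r → ∀ z ∈ Metric.sphere a r,
      (starRingEnd ℂ) z = (starRingEnd ℂ) a + (r : ℂ) ^ 2 / (z - a) ∧
      (z ≠ 0 → f z = z ^ n * (z - a) / ((r : ℂ) ^ 2 + (starRingEnd ℂ) a * (z - a)))) ∧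
    -- the unique pole a − r²/ā of that rational function lies outside cl(D(a,r)) iff |a| < r
    (∀ (a : ℂ) (r : ℝ), 0 < r → a ≠ 0 →
      (‖a‖ < r ↔ a - (r : ℂ) ^ 2 / (starRingEnd ℂ) a ∉ Metric.closedBall a r)) ∧
    -- (2) f is not holomorphic on any nonempty open subset of ℂ ∖ {0}
    (∀ U : Set ℂ, IsOpen U → U.Nonempty → (0 : ℂ) ∉ U → ¬ DifferentiableOn ℂ f U) ∧
    (∀ z : ℂ, z ≠ 0 →
      wirtingerDbar f z = -(z ^ n) / ((starRingEnd ℂ) z) ^ 2 ∧ wirtingerDbar f z ≠ 0) := by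
  obtain rfl : f = fun z => z ^ n / conj z := funext hf
  have hdbar (z : ℂ) (hz : z ≠ 0) :
      wirtingerDbar (fun z => z ^ n / conj z) z = -(z ^ n) / conj z ^ 2 ∧
        wirtingerDbar (fun z => z ^ n / conj z) z ≠ 0 := by
    rw [wirtingerDbar_pow_div_conj n hz]
    exact ⟨rfl, div_ne_zero (neg_ne_zero.2 (pow_ne_zero n hz))
      (pow_ne_zero 2 ((map_ne_zero _).2 hz))⟩
  refine ⟨fun a r _ ha => exists_extension_pow_div_conj_of_sphere n ha,
    fun a r hr z hz => ⟨conj_eq_add_sq_div_of_mem_sphere hr hz,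
      fun _ => pow_div_conj_eq_of_mem_sphere n hr hz⟩,
    fun a r hr ha => norm_lt_iff_sub_sq_div_conj_notMem_closedBall hr ha, ?_, hdbar⟩
  rintro U hU ⟨z, hzU⟩ h0U
  exact not_differentiableOn_of_wirtingerDbar_ne_zero hU hzU
    (hdbar z (ne_of_mem_of_not_mem hzU h0U)).2

theorem stmt_19 (n : ℕ) (hn : 2 ≤ n) (f : ℂ → ℂ)
    (hf : ∀ z : ℂ, f z = z ^ n / (starRingEnd ℂ) z) :
    -- (1) holomorphic extension from every circle enclosing the origin (|a| < r)
    (∀ (a : ℂ) (r : ℝ), 0 < r → ‖a‖ < r →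
      ∃ F : ℂ → ℂ, ContinuousOn F (Metric.closedBall a r) ∧
        DifferentiableOn ℂ F (Metric.ball a r) ∧
        ∀ z ∈ Metric.sphere a r, F z = f z) ∧
    -- the explicit identities on the circle |z − a| = r
    (∀ (a : ℂ) (r : ℝ), 0 < r → ∀ z ∈ Metric.sphere a r,
      (starRingEnd ℂ) z = (starRingEnd ℂ) a + (r : ℂ) ^ 2 / (z - a) ∧
      (z ≠ 0 → f z = z ^ n * (z - a) / ((r : ℂ) ^ 2 + (starRingEnd ℂ) a * (z - a)))) ∧
    -- the unique pole a − r²/ā of that rational function lies outside cl(D(a,r)) iff |a| < r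
    (∀ (a : ℂ) (r : ℝ), 0 < r → a ≠ 0 →
      (‖a‖ < r ↔ a - (r : ℂ) ^ 2 / (starRingEnd ℂ) a ∉ Metric.closedBall a r)) ∧
    -- (2) f is not holomorphic on any nonempty open subset of ℂ ∖ {0}
    (∀ U : Set ℂ, IsOpen U → U.Nonempty → (0 : ℂ) ∉ U → ¬ DifferentiableOn ℂ f U) ∧
    (∀ z : ℂ, z ≠ 0 →
      wirtingerDbar f z = -(z ^ n) / ((starRingEnd ℂ) z) ^ 2 ∧ wirtingerDbar f z ≠ 0) :=
  stmt_19_general n f hf
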